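/- Let G and H be finite graphs on the same vertex set, and suppose there is ι > 0 such that for every vertex u, the degree of u in H is at most ι times the degree of u in G. Then λ_{1,p}(G ∪ H) ≥ (1+ι)^{-1}·λ_{1,p}(G), where G ∪ H has edge set the union of the two edge sets. -/

import Mathlib

open Finset

/-- The valency (degree) of a vertex `u` in the multigraph with edge set `E`,
each edge `e` having endpoints `(ends e).1` and `(ends e).2`. -/
def graphVal {V E : Type} [Fintype E] [DecidableEq V] (ends : E → V × V) (u : V) : ℕ :=
  ∑ e : E, ((if (ends e).1 = u then 1 else 0) + (if (ends e).2 = u then 1 else 0))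

/-- The p-energy ‖dx‖_p^p = Σ_e |x(e_+) - x(e_-)|^p of a function on the vertices. -/
noncomputable def graphEnergy {V E : Type} [Fintype E] (p : ℝ) (ends : E → V × V)
    (x : V → ℝ) : ℝ :=
  ∑ e : E, |x (ends e).2 - x (ends e).1| ^ p

/-- inf_{c ∈ ℝ} Σ_u |x_u - c|^p · val(u). -/
noncomputable def graphDenom {V E : Type} [Fintype V] [Fintype E] [DecidableEq V]
    (p : ℝ) (ends : E → V × V) (x : V → ℝ) : ℝ :=
  sInf {t : ℝ | ∃ c : ℝ, t = ∑ u : V, |x u - c| ^ p * (graphVal ends u : ℝ)}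

/-- λ_{1,p}: the first positive eigenvalue of the graph p-Laplacian, via the
Rayleigh quotient characterisation: infimum over non-constant `x` of
energy/denominator. -/
noncomputable def lambda1 {V E : Type} [Fintype V] [Fintype E] [DecidableEq V]
    (p : ℝ) (ends : E → V × V) : ℝ :=
  sInf {r : ℝ | ∃ x : V → ℝ, (∃ u v : V, x u ≠ x v) ∧
    r = graphEnergy p ends x / graphDenom p ends x}

/-- Adjacency relation of the multigraph. -/
def graphAdj {V E : Type} (ends : E → V × V) (u v : V) : Prop :=
  ∃ e : E, ends e = (u, v) ∨ ends e = (v, u)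

/-- Connectivity of the multigraph. -/
def graphConnected {V E : Type} (ends : E → V × V) : Prop :=
  ∀ u v : V, Relation.ReflTransGen (graphAdj ends) u v

/-!
The Rayleigh quotients are compared function by function. Adding the edges of `H` can only
increase the energy `‖dx‖_p^p`, while the degrees satisfy `val_G ≤ val_{G ∪ H} ≤ (1 + ι) val_G`;
the denominator is an infimum of sums weighted by degrees, so it grows by a factor between
`1` and `1 + ι`. The lower bound `val_G ≤ val_{G ∪ H}` is what rules out a vanishing denominator
for `G ∪ H` next to a non-vanishing one for `G` (where division by zero would give `0`).
-/

theorem inv_mul_div_le_div {a a' b b' κ : ℝ} (ha' : 0 ≤ a') (haa' : a ≤ a')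
    (hb : 0 ≤ b) (hbb' : b ≤ b') (hb'b : b' ≤ κ * b) :
    κ⁻¹ * (a / b) ≤ a' / b' := by
  rcases hb.eq_or_lt with rfl | hb
  · simpa using div_nonneg ha' hbb'
  rw [inv_mul_eq_div, div_div, mul_comm]
  exact div_le_div₀ ha' haa' (hb.trans_le hbb') hb'b

section Graph

variable {V E E' : Type} [Fintype V] [Fintype E] [Fintype E'] [DecidableEq V]

omit [Fintype V] in
theorem graphVal_sum_elim {F : Type} [Fintype F] (endsG : E → V × V) (endsH : F → V × V)
    (u : V) : graphVal (Sum.elim endsG endsH) u = graphVal endsG u + graphVal endsH u := by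
  rw [graphVal, Fintype.sum_sum_type]
  rfl

omit [Fintype V] [DecidableEq V] in
theorem graphEnergy_sum_elim {F : Type} [Fintype F] (p : ℝ) (endsG : E → V × V)
    (endsH : F → V × V) (x : V → ℝ) :
    graphEnergy p (Sum.elim endsG endsH) x = graphEnergy p endsG x + graphEnergy p endsH x := by
  simp only [graphEnergy, Fintype.sum_sum_type, Sum.elim_inl, Sum.elim_inr]

omit [Fintype V] [DecidableEq V] in
theorem graphEnergy_nonneg (p : ℝ) (ends : E → V × V) (x : V → ℝ) :
    0 ≤ graphEnergy p ends x :=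
  sum_nonneg fun _ _ => Real.rpow_nonneg (abs_nonneg _) p

theorem graphDenom_eq_iInf (p : ℝ) (ends : E → V × V) (x : V → ℝ) :
    graphDenom p ends x = ⨅ c : ℝ, ∑ u : V, |x u - c| ^ p * (graphVal ends u : ℝ) := by
  simp only [graphDenom, iInf, Set.range, eq_comm]

omit [DecidableEq V] in
theorem bddBelow_range_weighted_sum (p : ℝ) (w : V → ℝ) (hw : ∀ u, 0 ≤ w u) (x : V → ℝ) :
    BddBelow (Set.range fun c : ℝ => ∑ u : V, |x u - c| ^ p * w u) :=
  ⟨0, by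
    rintro _ ⟨c, rfl⟩
    exact sum_nonneg fun u _ => mul_nonneg (Real.rpow_nonneg (abs_nonneg _) p) (hw u)⟩

theorem graphDenom_nonneg (p : ℝ) (ends : E → V × V) (x : V → ℝ) :
    0 ≤ graphDenom p ends x := by
  rw [graphDenom_eq_iInf]
  exact Real.iInf_nonneg fun c =>
    sum_nonneg fun u _ => mul_nonneg (Real.rpow_nonneg (abs_nonneg _) p) (Nat.cast_nonneg _)

theorem graphDenom_mono (p : ℝ) {ends : E → V × V} {ends' : E' → V × V}
    (hval : ∀ u, (graphVal ends u : ℝ) ≤ graphVal ends' u) (x : V → ℝ) :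
    graphDenom p ends x ≤ graphDenom p ends' x := by
  rw [graphDenom_eq_iInf, graphDenom_eq_iInf]
  exact ciInf_mono (bddBelow_range_weighted_sum p _ (fun _ => Nat.cast_nonneg _) x) fun c =>
    sum_le_sum fun u _ => mul_le_mul_of_nonneg_left (hval u) (Real.rpow_nonneg (abs_nonneg _) p)

theorem graphDenom_le_mul (p : ℝ) {κ : ℝ} (hκ : 0 ≤ κ) {ends : E → V × V} {ends' : E' → V × V}
    (hval : ∀ u, (graphVal ends' u : ℝ) ≤ κ * graphVal ends u) (x : V → ℝ) :
    graphDenom p ends' x ≤ κ * graphDenom p ends x := by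
  rw [graphDenom_eq_iInf, graphDenom_eq_iInf, Real.mul_iInf_of_nonneg hκ]
  refine ciInf_mono (bddBelow_range_weighted_sum p _ (fun _ => Nat.cast_nonneg _) x) fun c => ?_
  rw [mul_sum]
  refine sum_le_sum fun u _ => ?_
  rw [mul_left_comm]
  exact mul_le_mul_of_nonneg_left (hval u) (Real.rpow_nonneg (abs_nonneg _) p)

theorem lambda1_of_subsingleton [Subsingleton V] (p : ℝ) (ends : E → V × V) :
    lambda1 p ends = 0 := by
  rw [lambda1]
  convert Real.sInf_empty
  refine Set.eq_empty_of_forall_notMem ?_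
  rintro _ ⟨x, ⟨u, v, hne⟩, -⟩
  exact hne (congrArg x (Subsingleton.elim u v))

theorem lambda1_le_div (p : ℝ) (ends : E → V × V) {x : V → ℝ} (hx : ∃ u v, x u ≠ x v) :
    lambda1 p ends ≤ graphEnergy p ends x / graphDenom p ends x := by
  refine csInf_le ⟨0, ?_⟩ ⟨x, hx, rfl⟩
  rintro _ ⟨y, -, rfl⟩
  exact div_nonneg (graphEnergy_nonneg p ends y) (graphDenom_nonneg p ends y)

theorem le_lambda1 [Nontrivial V] (p : ℝ) (ends : E → V × V) {m : ℝ}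
    (h : ∀ x : V → ℝ, (∃ u v, x u ≠ x v) → m ≤ graphEnergy p ends x / graphDenom p ends x) :
    m ≤ lambda1 p ends := by
  obtain ⟨u, v, huv⟩ := exists_pair_ne V
  have hx : ∃ a b, (Pi.single u 1 : V → ℝ) a ≠ (Pi.single u 1 : V → ℝ) b :=
    ⟨u, v, by simp [huv.symm]⟩
  refine le_csInf ⟨_, _, hx, rfl⟩ ?_
  rintro _ ⟨x, hx, rfl⟩
  exact h x hx

theorem inv_mul_lambda1_le_lambda1 (p : ℝ) {κ : ℝ} (hκ : 0 ≤ κ) (ends : E → V × V)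
    (ends' : E' → V × V)
    (henergy : ∀ x, graphEnergy p ends x ≤ graphEnergy p ends' x)
    (hval : ∀ u, (graphVal ends u : ℝ) ≤ graphVal ends' u)
    (hval' : ∀ u, (graphVal ends' u : ℝ) ≤ κ * graphVal ends u) :
    κ⁻¹ * lambda1 p ends ≤ lambda1 p ends' := by
  cases subsingleton_or_nontrivial V
  · simp [lambda1_of_subsingleton]
  refine le_lambda1 p ends' fun x hx => ?_
  calc κ⁻¹ * lambda1 p ends
      ≤ κ⁻¹ * (graphEnergy p ends x / graphDenom p ends x) :=
        mul_le_mul_of_nonneg_left (lambda1_le_div p ends hx) (inv_nonneg.2 hκ)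
    _ ≤ graphEnergy p ends' x / graphDenom p ends' x :=
        inv_mul_div_le_div (graphEnergy_nonneg p ends' x) (henergy x)
          (graphDenom_nonneg p ends x) (graphDenom_mono p hval x)
          (graphDenom_le_mul p hκ hval' x)

end Graph

theorem stmt10_general {V E F : Type} [Fintype V] [Fintype E] [Fintype F] [DecidableEq V]
    (endsG : E → V × V) (endsH : F → V × V)
    (p : ℝ) (ι : ℝ) (hι : 0 < ι)
    (hdeg : ∀ u : V, (graphVal endsH u : ℝ) ≤ ι * (graphVal endsG u : ℝ)) :
    lambda1 p (Sum.elim endsG endsH : E ⊕ F → V × V) ≥ (1 + ι)⁻¹ * lambda1 p endsG := by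
  refine inv_mul_lambda1_le_lambda1 p (by linarith) endsG _ (fun x => ?_) (fun u => ?_)
    (fun u => ?_)
  · rw [graphEnergy_sum_elim]
    linarith [graphEnergy_nonneg p endsH x]
  · rw [graphVal_sum_elim, Nat.cast_add]
    linarith [(graphVal endsH u).cast_nonneg (α := ℝ)]
  · rw [graphVal_sum_elim, Nat.cast_add]
    linarith [hdeg u]

/-- Adding few edges: if every vertex has degree in H at most ι times its
degree in G, then λ_{1,p}(G ∪ H) ≥ (1+ι)⁻¹·λ_{1,p}(G). -/
theorem stmt10 {V E F : Type} [Fintype V] [Fintype E] [Fintype F] [DecidableEq V]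
    (endsG : E → V × V) (endsH : F → V × V)
    (p : ℝ) (hp : 1 < p) (ι : ℝ) (hι : 0 < ι)
    (hdeg : ∀ u : V, (graphVal endsH u : ℝ) ≤ ι * (graphVal endsG u : ℝ)) :
    lambda1 p (Sum.elim endsG endsH : E ⊕ F → V × V) ≥ (1 + ι)⁻¹ * lambda1 p endsG :=
  stmt10_general endsG endsH p ι hι hdeg
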